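/- arXiv:2504.04993 — 5 statements merged into one kernel-verified Lean document; each statement's English description precedes it below -/
import Mathlib

section
/- Let Λ be a free ℤ-module of finite rank and c : Λ → Λ a ℤ-linear involution. Then the map c − 1 induces a well-defined injective group homomorphism Λ/(Λ⁺ + Λ⁻) → Λ⁻/2Λ⁻, and the natural projection Λ⁻/2Λ⁻ → Λ⁻/(c−1)Λ (well defined since 2Λ⁻ ⊆ (c−1)Λ) is surjective with kernel exactly the image of that homomorphism; that is, there is a short exact sequence 0 → Λ/(Λ⁺ + Λ⁻) → Λ⁻/2Λ⁻ → Λ⁻/(c−1)Λ → 0. -/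
/-- Let `Λ` be a free `ℤ`-module of finite rank and `c : Λ → Λ` a `ℤ`-linear involution.
Then `c − 1` induces a well-defined injective group homomorphism
`Λ/(Λ⁺ + Λ⁻) → Λ⁻/2Λ⁻`, and the natural projection `Λ⁻/2Λ⁻ → Λ⁻/(c−1)Λ` is surjective
with kernel exactly the image of that homomorphism; that is, there is a short exact
sequence `0 → Λ/(Λ⁺ + Λ⁻) → Λ⁻/2Λ⁻ → Λ⁻/(c−1)Λ → 0`. -/
theorem exists_shortExact_sup_quotient (Λ : Type*) [AddCommGroup Λ] [Module ℤ Λ]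
    [Module.Free ℤ Λ] [Module.Finite ℤ Λ]
    (c : Λ →ₗ[ℤ] Λ) (hc : c ∘ₗ c = LinearMap.id) :
    ∃ f : (Λ ⧸ (LinearMap.ker (c - LinearMap.id) ⊔ LinearMap.ker (c + LinearMap.id))) →+
        ((LinearMap.ker (c + LinearMap.id)).toAddSubgroup ⧸
          (zsmulAddGroupHom (2 : ℤ) :
            (LinearMap.ker (c + LinearMap.id)).toAddSubgroup →+
              (LinearMap.ker (c + LinearMap.id)).toAddSubgroup).range),
      (∀ x : Λ, f (Submodule.Quotient.mk x) =
        QuotientAddGroup.mk ⟨c x - x, by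
          have h : c (c x) = x := LinearMap.ext_iff.mp hc x
          rw [Submodule.mem_toAddSubgroup, LinearMap.mem_ker]
          simp only [LinearMap.add_apply, map_sub, h, LinearMap.id_apply]
          abel⟩) ∧
      Function.Injective f ∧
      ∃ g : ((LinearMap.ker (c + LinearMap.id)).toAddSubgroup ⧸
          (zsmulAddGroupHom (2 : ℤ) :
            (LinearMap.ker (c + LinearMap.id)).toAddSubgroup →+
              (LinearMap.ker (c + LinearMap.id)).toAddSubgroup).range) →+
        ((LinearMap.ker (c + LinearMap.id)).toAddSubgroup ⧸
          (LinearMap.range (c - LinearMap.id)).toAddSubgroup.addSubgroupOf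
            (LinearMap.ker (c + LinearMap.id)).toAddSubgroup),
        (∀ y : (LinearMap.ker (c + LinearMap.id)).toAddSubgroup,
          g (QuotientAddGroup.mk y) = QuotientAddGroup.mk y) ∧
        Function.Surjective g ∧
        g.ker = f.range := by
  have hcc : ∀ x, c (c x) = x := fun x => LinearMap.ext_iff.mp hc x
  set M : AddSubgroup Λ := (LinearMap.ker (c + LinearMap.id)).toAddSubgroup with hMdef
  have memM : ∀ x : Λ, x ∈ M ↔ c x = -x := by
    intro x
    rw [hMdef, Submodule.mem_toAddSubgroup, LinearMap.mem_ker, LinearMap.add_apply,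
      LinearMap.id_apply, add_eq_zero_iff_eq_neg]
  have hmem : ∀ x : Λ, c x - x ∈ M := by
    intro x
    rw [memM, map_sub, hcc, neg_sub]
  have h2 : ∀ w : ↥M, (2 : ℤ) • w = w + w := fun w => two_zsmul w
  set N : AddSubgroup ↥M := (zsmulAddGroupHom (2 : ℤ) : ↥M →+ ↥M).range with hNdef
  set P : AddSubgroup ↥M :=
    (LinearMap.range (c - LinearMap.id)).toAddSubgroup.addSubgroupOf M with hPdef
  have memN : ∀ z : ↥M, z ∈ N ↔ ∃ w : ↥M, (2 : ℤ) • w = z := by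
    intro z; rw [hNdef, AddMonoidHom.mem_range]; rfl
  have memP : ∀ z : ↥M, z ∈ P ↔ ∃ u : Λ, c u - u = (z : Λ) := by
    intro z
    rw [hPdef, AddSubgroup.mem_addSubgroupOf, Submodule.mem_toAddSubgroup, LinearMap.mem_range]
    constructor
    · rintro ⟨u, hu⟩; exact ⟨u, by simpa using hu⟩
    · rintro ⟨u, hu⟩; exact ⟨u, by simpa using hu⟩
  -- the additive map Λ →+ M ⧸ N
  let φ : Λ →+ ↥M ⧸ N :=
    { toFun := fun x => QuotientAddGroup.mk ⟨c x - x, hmem x⟩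
      map_zero' := by
        show QuotientAddGroup.mk (⟨c 0 - 0, hmem 0⟩ : ↥M) = 0
        rw [show (⟨c 0 - 0, hmem 0⟩ : ↥M) = 0 from Subtype.ext (by simp),
          QuotientAddGroup.mk_zero]
      map_add' := fun a b => by
        show QuotientAddGroup.mk (⟨c (a + b) - (a + b), hmem _⟩ : ↥M) =
          QuotientAddGroup.mk (⟨c a - a, hmem a⟩ : ↥M) +
            QuotientAddGroup.mk (⟨c b - b, hmem b⟩ : ↥M)
        rw [← QuotientAddGroup.mk_add]
        congr 1
        apply Subtype.ext
        show c (a + b) - (a + b) = (c a - a) + (c b - b)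
        rw [map_add]; abel }
  have hφ : ∀ x : Λ, φ x = QuotientAddGroup.mk ⟨c x - x, hmem x⟩ := fun _ => rfl
  set S : Submodule ℤ Λ :=
    LinearMap.ker (c - LinearMap.id) ⊔ LinearMap.ker (c + LinearMap.id) with hSdef
  have hker0 : ∀ x ∈ S.toAddSubgroup, φ x = 0 := by
    intro x hx
    have hxS : x ∈ S := (Submodule.mem_toAddSubgroup S).mp hx
    rw [hSdef] at hxS
    rcases Submodule.mem_sup.mp hxS with ⟨a, ha, b, hb, rfl⟩
    have ha' : c a = a := by
      have := LinearMap.mem_ker.mp ha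
      simpa [sub_eq_zero] using this
    have hb' : c b = -b := by
      have hbM : b ∈ M := hb
      exact (memM b).mp hbM
    rw [hφ, QuotientAddGroup.eq_zero_iff, memN]
    refine ⟨⟨-b, by rw [memM, map_neg, hb', neg_neg]⟩, ?_⟩
    rw [h2]
    apply Subtype.ext
    show -b + -b = c (a + b) - (a + b)
    rw [map_add, ha', hb']
    abel
  have hker1 : ∀ x : Λ, φ x = 0 → x ∈ S := by
    intro x hx0
    rw [hφ, QuotientAddGroup.eq_zero_iff, memN] at hx0
    obtain ⟨w, hw⟩ := hx0
    rw [h2] at hw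
    have hw' : c (w : Λ) = -(w : Λ) := (memM _).mp w.2
    have hwv : (w : Λ) + (w : Λ) = c x - x := congrArg Subtype.val hw
    rw [hSdef, Submodule.mem_sup]
    refine ⟨x + w, ?_, -(w : Λ), ?_, by abel⟩
    · rw [LinearMap.mem_ker, LinearMap.sub_apply, LinearMap.id_apply, sub_eq_zero, map_add, hw']
      have hcx : c x = x + ((w : Λ) + (w : Λ)) := by rw [hwv]; abel
      rw [hcx]; abel
    · rw [LinearMap.mem_ker, LinearMap.add_apply, LinearMap.id_apply, map_neg, hw']
      abel
  let f : (Λ ⧸ S) →+ (↥M ⧸ N) := QuotientAddGroup.lift S.toAddSubgroup φ hker0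
  have hf : ∀ x : Λ, f (Submodule.Quotient.mk x) = φ x := fun _ => rfl
  have hfinj : Function.Injective f := by
    intro p q hpq
    obtain ⟨a, rfl⟩ := Submodule.Quotient.mk_surjective _ p
    obtain ⟨b, rfl⟩ := Submodule.Quotient.mk_surjective _ q
    rw [Submodule.Quotient.eq]
    apply hker1
    have hab : φ a = φ b := by rw [← hf, ← hf]; exact hpq
    rw [map_sub, hab, sub_self]
  refine ⟨f, fun x => hf x, hfinj, ?_⟩
  have hNP : ∀ z ∈ N, QuotientAddGroup.mk' P z = 0 := by
    intro z hz
    obtain ⟨w, hw⟩ := (memN z).mp hz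
    rw [h2] at hw
    have hw' : c (w : Λ) = -(w : Λ) := (memM _).mp w.2
    have hwv : (w : Λ) + (w : Λ) = (z : Λ) := congrArg Subtype.val hw
    rw [QuotientAddGroup.mk'_apply, QuotientAddGroup.eq_zero_iff, memP]
    refine ⟨-(w : Λ), ?_⟩
    rw [map_neg, hw', neg_neg, ← hwv]
    abel
  refine ⟨QuotientAddGroup.lift N (QuotientAddGroup.mk' P) hNP, fun y => rfl, ?_, ?_⟩
  · intro q
    exact QuotientAddGroup.induction_on q fun y => ⟨QuotientAddGroup.mk y, rfl⟩
  · ext q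
    refine QuotientAddGroup.induction_on q fun y => ?_
    rw [AddMonoidHom.mem_ker, AddMonoidHom.mem_range]
    constructor
    · intro hy
      have hyP : y ∈ P := by
        have hy' : QuotientAddGroup.mk' P y = 0 := hy
        rwa [QuotientAddGroup.mk'_apply, QuotientAddGroup.eq_zero_iff] at hy'
      obtain ⟨u, hu⟩ := (memP y).mp hyP
      refine ⟨Submodule.Quotient.mk u, ?_⟩
      rw [hf, hφ]
      exact congrArg QuotientAddGroup.mk (Subtype.ext hu)
    · rintro ⟨p, hp⟩
      obtain ⟨x, rfl⟩ := Submodule.Quotient.mk_surjective _ p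
      rw [hf, hφ] at hp
      rw [QuotientAddGroup.eq, memN] at hp
      obtain ⟨w, hw⟩ := hp
      rw [h2] at hw
      have hw' : c (w : Λ) = -(w : Λ) := (memM _).mp w.2
      have hwv : (w : Λ) + (w : Λ) = -(c x - x) + (y : Λ) := congrArg Subtype.val hw
      have hy : (y : Λ) = c x - x + ((w : Λ) + (w : Λ)) := by rw [hwv]; abel
      show QuotientAddGroup.mk' P y = 0
      rw [QuotientAddGroup.mk'_apply, QuotientAddGroup.eq_zero_iff, memP]
      refine ⟨x - (w : Λ), ?_⟩
      rw [map_sub, hw', hy]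
      abel
end

section
/- Let Λ be a free ℤ-module of finite rank and c : Λ → Λ a ℤ-linear involution. Then the quotient groups Λ/(Λ⁺ + Λ⁻) and Λ⁻/(c−1)Λ are finite and their orders satisfy #(Λ/(Λ⁺ + Λ⁻)) · #(Λ⁻/(c−1)Λ) = 2^{rank Λ⁻}. -/
/-!
On `Λ⁻` the map `f = c - 1` is multiplication by `-2`, so `f(Λ⁻) = 2Λ⁻`, and `ker f = Λ⁺`; hence
`Λ⁺ + Λ⁻ = f⁻¹(2Λ⁻)` and `Λ/(Λ⁺ + Λ⁻) ≅ f(Λ)/2Λ⁻`. As `2Λ⁻ ≤ (c - 1)Λ ≤ Λ⁻`, multiplicativity of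
the index turns the product into `[Λ⁻ : 2Λ⁻] = 2 ^ rank Λ⁻`. This is nonzero, so both quotients
are finite.
-/

open LinearMap Submodule

theorem Submodule.natCard_quotient_comap {R M M' : Type*} [Ring R] [AddCommGroup M] [Module R M]
    [AddCommGroup M'] [Module R M'] (f : M →ₗ[R] M') (S : Submodule R M') :
    Nat.card (M ⧸ S.comap f) = S.toAddSubgroup.relIndex (range f).toAddSubgroup :=
  AddSubgroup.index_comap S.toAddSubgroup f.toAddMonoidHom

namespace LinearMap

variable {R M : Type*} [Ring R] [AddCommGroup M] [Module R M] (c : M →ₗ[R] M)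

variable {c} in
theorem range_sub_id_le_ker_add_id (hc : c ∘ₗ c = id) : range (c - id) ≤ ker (c + id) := by
  rintro _ ⟨x, rfl⟩
  have hcc : c (c x) = x := congr($hc x)
  simp [hcc]

theorem toAddSubgroup_map_sub_id_ker_add_id :
    ((ker (c + id)).map (c - id)).toAddSubgroup =
      (ker (c + id)).toAddSubgroup.map (nsmulAddMonoidHom 2) := by
  have h : ∀ x ∈ ker (c + id), (c - id : M →ₗ[R] M) x = 2 • -x := fun x hx => by
    rw [mem_ker, add_apply, id_apply, add_eq_zero_iff_eq_neg] at hx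
    rw [sub_apply, id_apply, hx, two_nsmul, sub_eq_add_neg]
  ext y
  simp only [Submodule.mem_toAddSubgroup, Submodule.mem_map, AddSubgroup.mem_map,
    nsmulAddMonoidHom_apply]
  constructor
  · rintro ⟨x, hx, rfl⟩
    exact ⟨-x, neg_mem hx, (h x hx).symm⟩
  · rintro ⟨x, hx, rfl⟩
    exact ⟨-x, neg_mem hx, by rw [h _ (neg_mem hx), neg_neg]⟩

end LinearMap

/-- Let `Λ` be a free `ℤ`-module of finite rank and `c : Λ → Λ` a `ℤ`-linear involution.
Then the quotient groups `Λ/(Λ⁺ + Λ⁻)` and `Λ⁻/(c−1)Λ` are finite and their orders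
satisfy `#(Λ/(Λ⁺ + Λ⁻)) · #(Λ⁻/(c−1)Λ) = 2^(rank Λ⁻)`. -/
theorem card_quotient_sup_mul_card_quotient_range (Λ : Type*) [AddCommGroup Λ] [Module ℤ Λ]
    [Module.Free ℤ Λ] [Module.Finite ℤ Λ]
    (c : Λ →ₗ[ℤ] Λ) (hc : c ∘ₗ c = LinearMap.id) :
    Finite (Λ ⧸ (LinearMap.ker (c - LinearMap.id) ⊔ LinearMap.ker (c + LinearMap.id))) ∧
    Finite ((LinearMap.ker (c + LinearMap.id)).toAddSubgroup ⧸
      (LinearMap.range (c - LinearMap.id)).toAddSubgroup.addSubgroupOf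
        (LinearMap.ker (c + LinearMap.id)).toAddSubgroup) ∧
    Nat.card (Λ ⧸ (LinearMap.ker (c - LinearMap.id) ⊔ LinearMap.ker (c + LinearMap.id))) *
      Nat.card ((LinearMap.ker (c + LinearMap.id)).toAddSubgroup ⧸
        (LinearMap.range (c - LinearMap.id)).toAddSubgroup.addSubgroupOf
          (LinearMap.ker (c + LinearMap.id)).toAddSubgroup) =
      2 ^ Module.finrank ℤ (LinearMap.ker (c + LinearMap.id)) := by
  -- The statement's `Module ℤ` on subtypes is `AddCommGroup.toIntModule`; make `Λ`'s agree with it.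
  obtain rfl : ‹Module ℤ Λ› = AddCommGroup.toIntModule Λ := Subsingleton.elim _ _
  have : IsNoetherian ℤ Λ := isNoetherian_of_isNoetherianRing_of_finite ℤ Λ
  set N := ker (c + LinearMap.id)
  set f := c - LinearMap.id
  have hcard : Nat.card (Λ ⧸ (ker f ⊔ N)) *
      (range f).toAddSubgroup.relIndex N.toAddSubgroup = 2 ^ Module.finrank ℤ N := by
    calc _ = (N.map f).toAddSubgroup.relIndex (range f).toAddSubgroup *
          (range f).toAddSubgroup.relIndex N.toAddSubgroup := by
          rw [sup_comm, ← comap_map_eq, natCard_quotient_comap]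
      _ = (N.map f).toAddSubgroup.relIndex N.toAddSubgroup :=
          AddSubgroup.relIndex_mul_relIndex _ _ _ (map_le_range (f := f))
            (range_sub_id_le_ker_add_id hc)
      _ = 2 ^ Module.finrank ℤ N := by
          rw [toAddSubgroup_map_sub_id_ker_add_id c, AddSubgroup.relIndex_map_nsmul]
          rfl
  have hne : Nat.card (Λ ⧸ (ker f ⊔ N)) *
      (range f).toAddSubgroup.relIndex N.toAddSubgroup ≠ 0 := by
    rw [hcard]
    positivity
  exact ⟨Nat.finite_of_card_ne_zero (left_ne_zero_of_mul hne),
    Nat.finite_of_card_ne_zero (right_ne_zero_of_mul hne), hcard⟩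
end

section
/- Let V be a real vector space, c : V → V an ℝ-linear involution, and Λ ⊆ V a subgroup with c(Λ) = Λ. Then the map c − 1 induces an isomorphism of abelian groups {v ∈ V : (c−1)v ∈ Λ} / (V^{c=1} + Λ) ≅ (Λ ∩ ker(c+1)) / (c−1)Λ, where the left-hand side is the quotient of the subgroup {v ∈ V : cv − v ∈ Λ} of V by the subgroup generated by V^{c=1} and Λ, and (c−1)Λ is the image of Λ under c − 1. -/
/-- Let `V` be a real vector space, `c : V → V` an `ℝ`-linear involution, and `Λ ⊆ V`
a subgroup with `c(Λ) = Λ`.  Then `c − 1` induces an isomorphism of abelian groups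
`{v ∈ V : (c−1)v ∈ Λ} / (V^{c=1} + Λ) ≅ (Λ ∩ ker(c+1)) / (c−1)Λ`. -/
theorem exists_addEquiv_quotient_comap_quotient_inf (V : Type*) [AddCommGroup V] [Module ℝ V]
    (c : V →ₗ[ℝ] V) (hc : c ∘ₗ c = LinearMap.id)
    (Λ : AddSubgroup V) (hΛ : Λ.map c.toAddMonoidHom = Λ) :
    -- `S = {v ∈ V : (c−1)v ∈ Λ}`
    let S : AddSubgroup V := Λ.comap (c - LinearMap.id).toAddMonoidHom
    -- `K = V^{c=1} = ker (c − 1 : V → V)`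
    let K : AddSubgroup V := (LinearMap.ker (c - LinearMap.id)).toAddSubgroup
    -- `Λ' = Λ ∩ ker (c + 1)`
    let Λ' : AddSubgroup V := Λ ⊓ (LinearMap.ker (c + LinearMap.id)).toAddSubgroup
    -- `(c−1)Λ`, the image of `Λ` under `c − 1`
    let I : AddSubgroup V := Λ.map (c - LinearMap.id).toAddMonoidHom
    ∃ e : (S ⧸ ((K ⊔ Λ).addSubgroupOf S)) ≃+ (Λ' ⧸ (I.addSubgroupOf Λ')),
      ∀ v : S,
        e (QuotientAddGroup.mk v) =
          QuotientAddGroup.mk ⟨c ↑v - ↑v, by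
            have h : c (c (v : V)) = (v : V) := LinearMap.ext_iff.mp hc (v : V)
            refine AddSubgroup.mem_inf.mpr ⟨?_, ?_⟩
            · exact v.2
            · rw [Submodule.mem_toAddSubgroup, LinearMap.mem_ker]
              simp only [LinearMap.add_apply, map_sub, h, LinearMap.id_apply]
              abel⟩ := by
  intro S K Λ' I
  have hcc : ∀ v : V, c (c v) = v := fun v => LinearMap.ext_iff.mp hc v
  have hmemS : ∀ v : V, v ∈ S ↔ c v - v ∈ Λ := by
    intro v
    simp [S, AddSubgroup.mem_comap, LinearMap.sub_apply]
  have hmem : ∀ v : S, c ↑v - ↑v ∈ Λ' := by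
    intro v
    refine AddSubgroup.mem_inf.mpr ⟨(hmemS _).mp v.2, ?_⟩
    rw [Submodule.mem_toAddSubgroup, LinearMap.mem_ker]
    simp only [LinearMap.add_apply, map_sub, hcc, LinearMap.id_apply]
    abel
  let ψ : S →+ Λ' :=
  { toFun := fun v => ⟨c ↑v - ↑v, hmem v⟩
    map_zero' := by ext; simp
    map_add' := by
      intro a b
      ext
      simp only [AddSubgroup.coe_add, map_add, AddSubgroup.coe_mk]
      push_cast
      abel }
  let φ := (QuotientAddGroup.mk' (I.addSubgroupOf Λ')).comp ψ
  have hφ : ∀ v : S, φ v = QuotientAddGroup.mk ⟨c ↑v - ↑v, hmem v⟩ := fun v => rfl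
  have hsurj : Function.Surjective φ := by
    intro x
    obtain ⟨y, rfl⟩ := QuotientAddGroup.mk'_surjective _ x
    have hy : c (y : V) = -(y : V) := by
      have := (AddSubgroup.mem_inf.mp y.2).2
      rw [Submodule.mem_toAddSubgroup, LinearMap.mem_ker] at this
      simp only [LinearMap.add_apply, LinearMap.id_apply] at this
      exact eq_neg_of_add_eq_zero_left this
    have key : c (-((2⁻¹ : ℝ) • (y : V))) - -((2⁻¹ : ℝ) • (y : V)) = (y : V) := by
      rw [map_neg, map_smul, hy, smul_neg, neg_neg, sub_neg_eq_add, ← add_smul]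
      norm_num
    refine ⟨⟨-((2⁻¹ : ℝ) • (y : V)), (hmemS _).mpr ?_⟩, ?_⟩
    · rw [key]; exact (AddSubgroup.mem_inf.mp y.2).1
    · rw [hφ]
      exact congrArg QuotientAddGroup.mk (Subtype.ext key)
  have hker : φ.ker = (K ⊔ Λ).addSubgroupOf S := by
    ext v
    constructor
    · intro hv
      rw [AddMonoidHom.mem_ker] at hv
      have : ψ v ∈ I.addSubgroupOf Λ' := by
        rwa [← QuotientAddGroup.eq_zero_iff (ψ v)]
      rw [AddSubgroup.mem_addSubgroupOf] at this
      obtain ⟨l, hl, hl2⟩ := this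
      simp only [LinearMap.toAddMonoidHom_coe, LinearMap.sub_apply, LinearMap.id_apply] at hl2
      rw [AddSubgroup.mem_addSubgroupOf]
      rw [AddSubgroup.mem_sup]
      refine ⟨(v : V) - l, ?_, l, hl, by abel⟩
      rw [Submodule.mem_toAddSubgroup, LinearMap.mem_ker]
      simp only [LinearMap.sub_apply, LinearMap.id_apply, map_sub]
      have h2 : c l - l = c (v : V) - (v : V) := hl2
      rw [h2, sub_self]
    · intro hv
      rw [AddSubgroup.mem_addSubgroupOf, AddSubgroup.mem_sup] at hv
      obtain ⟨k, hk, l, hl, hkl⟩ := hv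
      rw [Submodule.mem_toAddSubgroup, LinearMap.mem_ker] at hk
      simp only [LinearMap.sub_apply, LinearMap.id_apply, sub_eq_zero] at hk
      rw [AddMonoidHom.mem_ker, hφ, QuotientAddGroup.eq_zero_iff,
        AddSubgroup.mem_addSubgroupOf]
      refine ⟨l, hl, ?_⟩
      simp only [LinearMap.toAddMonoidHom_coe, LinearMap.sub_apply, LinearMap.id_apply,
        AddSubgroup.coe_mk]
      rw [← hkl]
      simp only [map_add, hk]
      abel
  refine ⟨(QuotientAddGroup.quotientAddEquivOfEq hker.symm).trans
    (QuotientAddGroup.quotientKerEquivOfSurjective φ hsurj), fun v => rfl⟩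
end

section
/- Let V be a finite-dimensional real vector space, Λ ⊆ V a lattice (a discrete subgroup spanning V), and c : V → V an ℝ-linear involution with c(Λ) = Λ. Let T = V/Λ with the quotient topology, let c̄ : T → T be the induced involution, and let G = {x ∈ T : c̄(x) = x}. Then the connected component of 0 in G equals the image of V^{c=1} = ker(c − 1 : V → V) under the projection V → T. -/
open Set

/-- Let `V` be a finite-dimensional real vector space, `Λ ⊆ V` a lattice, and
`c : V → V` an `ℝ`-linear involution with `c(Λ) = Λ`.  Let `T = V/Λ` with the quotient
topology, `c̄ : T → T` the induced involution, and `G = {x ∈ T : c̄(x) = x}`.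
Then the connected component of `0` in `G` equals the image of `V^{c=1} = ker (c − 1)`
under the projection `V → T`. -/
theorem connectedComponentIn_fixedPoints_eq_image_ker (V : Type*) [NormedAddCommGroup V]
    [NormedSpace ℝ V] [FiniteDimensional ℝ V]
    (Λ : Submodule ℤ V) [DiscreteTopology Λ] [IsZLattice ℝ Λ]
    (c : V →ₗ[ℝ] V) (hc : c ∘ₗ c = LinearMap.id)
    (hΛ : Λ.toAddSubgroup.map c.toAddMonoidHom = Λ.toAddSubgroup)
    (cbar : (V ⧸ Λ.toAddSubgroup) → (V ⧸ Λ.toAddSubgroup))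
    (hcbar : ∀ v : V, cbar (QuotientAddGroup.mk v) = QuotientAddGroup.mk (c v)) :
    connectedComponentIn {x : V ⧸ Λ.toAddSubgroup | cbar x = x} 0 =
      QuotientAddGroup.mk '' ((LinearMap.ker (c - LinearMap.id) : Submodule ℝ V) : Set V) := by
  classical
  set q : V →ₗ[ℝ] V := c - LinearMap.id with hqdef
  have hqcont : Continuous q := q.continuous_of_finiteDimensional
  set G : Set (V ⧸ Λ.toAddSubgroup) := {x | cbar x = x} with hG
  set W : Set V := ((LinearMap.ker q : Submodule ℝ V) : Set V) with hWdef
  have hWmem : ∀ v, v ∈ W ↔ c v = v := by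
    intro v
    simp [hWdef, LinearMap.mem_ker, hqdef, sub_eq_zero, LinearMap.sub_apply]
  -- c maps Λ into Λ
  have hcΛ : ∀ v ∈ Λ.toAddSubgroup, c v ∈ Λ.toAddSubgroup := by
    intro v hv
    rw [← hΛ]
    exact ⟨v, hv, rfl⟩
  -- π(W) ⊆ G
  have hWG : QuotientAddGroup.mk '' W ⊆ G := by
    rintro _ ⟨v, hv, rfl⟩
    show cbar _ = _
    rw [hcbar, (hWmem v).1 hv]
  -- if π v ∈ G then q v ∈ Λ
  have hGq : ∀ v : V, (QuotientAddGroup.mk v : V ⧸ Λ.toAddSubgroup) ∈ G →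
      q v ∈ Λ.toAddSubgroup := by
    intro v hv
    have h1 : (QuotientAddGroup.mk (c v) : V ⧸ Λ.toAddSubgroup) = QuotientAddGroup.mk v := by
      rw [← hcbar]; exact hv
    have h2 : -(c v) + v ∈ Λ.toAddSubgroup := QuotientAddGroup.eq.1 h1
    have h3 : q v = -(-(c v) + v) := by
      simp [hqdef, LinearMap.sub_apply]
      abel
    rw [h3]
    exact neg_mem h2
  -- discreteness gives ε
  obtain ⟨ε, hε, hball⟩ : ∃ ε > 0, ∀ v ∈ Λ.toAddSubgroup, ‖v‖ < ε → v = 0 := by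
    have h0 : IsOpen ({0} : Set Λ) := isOpen_discrete _
    rw [Metric.isOpen_iff] at h0
    obtain ⟨ε, hε, hsub⟩ := h0 0 rfl
    refine ⟨ε, hε, fun v hv hnorm => ?_⟩
    have hv' : v ∈ Λ := hv
    have : (⟨v, hv'⟩ : Λ) ∈ Metric.ball (0 : Λ) ε := by
      simp only [Metric.mem_ball, Subtype.dist_eq, dist_zero_right]
      simpa using hnorm
    have := hsub this
    simpa [Subtype.ext_iff] using this
  -- the open set U
  set U : Set (V ⧸ Λ.toAddSubgroup) :=
    QuotientAddGroup.mk '' (q ⁻¹' Metric.ball 0 ε) with hUdef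
  have hUopen : IsOpen U :=
    QuotientAddGroup.isOpenMap_coe _ (Metric.isOpen_ball.preimage hqcont)
  have hGU : G ∩ U ⊆ QuotientAddGroup.mk '' W := by
    rintro x ⟨hxG, v, hv, rfl⟩
    have h1 : q v ∈ Λ.toAddSubgroup := hGq v hxG
    have h2 : ‖q v‖ < ε := by simpa [mem_ball_zero_iff] using hv
    have h3 : q v = 0 := hball _ h1 h2
    exact ⟨v, by simpa [hWdef, LinearMap.mem_ker] using h3, rfl⟩
  have hWU : QuotientAddGroup.mk '' W ⊆ U := by
    apply Set.image_mono
    intro v hv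
    have : q v = 0 := by simpa [hWdef, LinearMap.mem_ker] using hv
    simp [Set.mem_preimage, this, mem_ball_zero_iff, hε]
  -- closedness of π '' W
  set Λ' : AddSubgroup V := Λ.toAddSubgroup.map q.toAddMonoidHom with hΛ'def
  have hΛ'sub : (Λ' : Set V) ⊆ (Λ.toAddSubgroup : Set V) := by
    rintro _ ⟨v, hv, rfl⟩
    have : c v - v ∈ Λ.toAddSubgroup := sub_mem (hcΛ v hv) hv
    simpa [hqdef, LinearMap.sub_apply] using this
  have hdiscΛ : DiscreteTopology ((Λ.toAddSubgroup : Set V) : Type _) :=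
    (inferInstance : DiscreteTopology Λ)
  have hdisc : DiscreteTopology Λ' := DiscreteTopology.of_subset hdiscΛ hΛ'sub
  have hclosedΛ' : IsClosed (Λ' : Set V) := AddSubgroup.isClosed_of_discrete
  have hpre : QuotientAddGroup.mk ⁻¹' (QuotientAddGroup.mk '' W : Set (V ⧸ Λ.toAddSubgroup))
      = q ⁻¹' (Λ' : Set V) := by
    ext v
    constructor
    · rintro ⟨w, hw, hvw⟩
      have h2 : -w + v ∈ Λ.toAddSubgroup := QuotientAddGroup.eq.1 hvw
      have hqw : q w = 0 := by simpa [hWdef, LinearMap.mem_ker] using hw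
      refine ⟨-w + v, h2, ?_⟩
      have : q (-w + v) = q v := by
        rw [map_add, map_neg, hqw]
        abel
      exact this
    · rintro ⟨l, hl, hql⟩
      refine ⟨v - l, ?_, ?_⟩
      · have hql' : q l = q v := hql
        have : q (v - l) = 0 := by rw [map_sub, hql', sub_self]
        simpa [hWdef, LinearMap.mem_ker] using this
      · exact (QuotientAddGroup.eq).2 (by simpa using hl)
  have hclosed : IsClosed (QuotientAddGroup.mk '' W : Set (V ⧸ Λ.toAddSubgroup)) := by
    rw [← (QuotientAddGroup.isQuotientMap_mk Λ.toAddSubgroup).isClosed_preimage, hpre]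
    exact hclosedΛ'.preimage hqcont
  -- 0 ∈ G and 0 ∈ π '' W
  have h0W : (0 : V ⧸ Λ.toAddSubgroup) ∈ QuotientAddGroup.mk '' W :=
    ⟨0, by simp [hWdef], by simp⟩
  have h0G : (0 : V ⧸ Λ.toAddSubgroup) ∈ G := hWG h0W
  apply Set.Subset.antisymm
  · -- component ⊆ π '' W
    rw [connectedComponentIn_eq_image h0G]
    have hclopen : IsClopen (Subtype.val ⁻¹' (QuotientAddGroup.mk '' W) : Set G) := by
      constructor
      · exact hclosed.preimage continuous_subtype_val
      · have heq : (Subtype.val ⁻¹' (QuotientAddGroup.mk '' W) : Set G)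
            = Subtype.val ⁻¹' U := by
          ext ⟨x, hx⟩
          simp only [Set.mem_preimage]
          exact ⟨fun h => hWU h, fun h => hGU ⟨hx, h⟩⟩
        rw [heq]
        exact hUopen.preimage continuous_subtype_val
    rintro _ ⟨y, hy, rfl⟩
    exact hclopen.connectedComponent_subset h0W hy
  · -- π '' W ⊆ component
    refine IsPreconnected.subset_connectedComponentIn ?_ h0W hWG
    exact ((LinearMap.ker q).convex.isPreconnected).image _
      (QuotientAddGroup.continuous_mk.continuousOn)
end

section
/- Let V be a finite-dimensional real vector space, Λ ⊆ V a lattice (a discrete subgroup spanning V), and c : V → V an ℝ-linear involution with c(Λ) = Λ. Let T = V/Λ with the quotient topology, let c̄ : T → T be the induced involution, and let G = {x ∈ T : c̄(x) = x}. Then G has finitely many connected components, and their number equals the order of the finite group (Λ ∩ ker(c+1)) / (c−1)Λ. -/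
/-- Let `V` be a finite-dimensional real vector space, `Λ ⊆ V` a lattice, and
`c : V → V` an `ℝ`-linear involution with `c(Λ) = Λ`.  Let `T = V/Λ` with the quotient
topology, `c̄ : T → T` the induced involution, and `G = {x ∈ T : c̄(x) = x}`.
Then `G` has finitely many connected components, and their number equals the order of
the finite group `(Λ ∩ ker(c+1)) / (c−1)Λ`. -/
theorem card_connectedComponents_fixedPoints (V : Type*) [NormedAddCommGroup V]
    [NormedSpace ℝ V] [FiniteDimensional ℝ V]
    (Λ : Submodule ℤ V) [DiscreteTopology Λ] [IsZLattice ℝ Λ]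
    (c : V →ₗ[ℝ] V) (hc : c ∘ₗ c = LinearMap.id)
    (hΛ : Λ.toAddSubgroup.map c.toAddMonoidHom = Λ.toAddSubgroup)
    (cbar : (V ⧸ Λ.toAddSubgroup) → (V ⧸ Λ.toAddSubgroup))
    (hcbar : ∀ v : V, cbar (QuotientAddGroup.mk v) = QuotientAddGroup.mk (c v)) :
    -- `Λ' = Λ ∩ ker (c + 1)`
    let Λ' : AddSubgroup V := Λ.toAddSubgroup ⊓ (LinearMap.ker (c + LinearMap.id)).toAddSubgroup
    -- `(c−1)Λ`, the image of `Λ` under `c − 1`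
    let I : AddSubgroup V := Λ.toAddSubgroup.map (c - LinearMap.id).toAddMonoidHom
    Finite (ConnectedComponents {x : V ⧸ Λ.toAddSubgroup // cbar x = x}) ∧
    Finite (Λ' ⧸ (I.addSubgroupOf Λ')) ∧
    Nat.card (ConnectedComponents {x : V ⧸ Λ.toAddSubgroup // cbar x = x}) =
      Nat.card (Λ' ⧸ (I.addSubgroupOf Λ')) := by
  classical
  intro Λ' I
  set J := I.addSubgroupOf Λ' with hJdef
  -- basic consequences of the hypotheses
  have hcc : ∀ v : V, c (c v) = v := fun v => by
    simpa using LinearMap.ext_iff.mp hc v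
  have hcΛ : ∀ v ∈ Λ.toAddSubgroup, c v ∈ Λ.toAddSubgroup := fun v hv =>
    hΛ ▸ ⟨v, hv, rfl⟩
  have hGmem : ∀ v : V, cbar (QuotientAddGroup.mk v) = QuotientAddGroup.mk v ↔
      c v - v ∈ Λ.toAddSubgroup := fun v => by
    rw [hcbar, QuotientAddGroup.eq, show -(c v) + v = -(c v - v) by abel, neg_mem_iff]
  have mem' : ∀ v : V, c v - v ∈ Λ.toAddSubgroup → c v - v ∈ Λ' := by
    intro v hv
    rw [AddSubgroup.mem_inf]
    refine ⟨hv, ?_⟩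
    show c v - v ∈ LinearMap.ker (c + LinearMap.id)
    rw [LinearMap.mem_ker]
    simp only [LinearMap.add_apply, LinearMap.id_apply, map_sub, hcc]
    abel
  -- the invariant of a fixed point
  have memG_out : ∀ x : {x : V ⧸ Λ.toAddSubgroup // cbar x = x},
      c ((x : {x : V ⧸ Λ.toAddSubgroup // cbar x = x}).1.out) - x.1.out ∈ Λ' := by
    intro x
    apply mem'
    rw [← hGmem, QuotientAddGroup.out_eq', x.2]
  set G := {x : V ⧸ Λ.toAddSubgroup // cbar x = x} with hGdef
  set f : G → Λ' ⧸ J := fun x => QuotientAddGroup.mk ⟨c x.1.out - x.1.out, memG_out x⟩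
    with hfdef
  -- independence of representative
  have frep : ∀ (v w : V) (hv : c v - v ∈ Λ') (hw : c w - w ∈ Λ'),
      (QuotientAddGroup.mk v : V ⧸ Λ.toAddSubgroup) = QuotientAddGroup.mk w →
      (QuotientAddGroup.mk ⟨c v - v, hv⟩ : Λ' ⧸ J) = QuotientAddGroup.mk ⟨c w - w, hw⟩ := by
    intro v w hv hw hvw
    rw [QuotientAddGroup.eq] at hvw ⊢
    rw [hJdef, AddSubgroup.mem_addSubgroupOf]
    refine ⟨-v + w, hvw, ?_⟩
    simp only [LinearMap.toAddMonoidHom_coe, LinearMap.sub_apply, LinearMap.id_apply,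
      map_add, map_neg, AddSubgroup.coe_add, AddSubgroup.coe_neg]
  have fval : ∀ (x : G) (w : V) (hw : c w - w ∈ Λ'),
      (QuotientAddGroup.mk w : V ⧸ Λ.toAddSubgroup) = x.1 →
      f x = QuotientAddGroup.mk ⟨c w - w, hw⟩ := by
    intro x w hw hwx
    exact frep _ _ (memG_out x) hw (by rw [QuotientAddGroup.out_eq', hwx])
  -- f is locally constant
  have hdisc : ∃ ε > 0, ∀ w : V, w ∈ Λ.toAddSubgroup → ‖w‖ < ε → w = 0 := by
    have h0 : IsOpen ({0} : Set Λ) := isOpen_discrete _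
    rcases Metric.isOpen_iff.mp h0 0 rfl with ⟨ε, hε, hball⟩
    refine ⟨ε, hε, fun w hw hlt => ?_⟩
    have : (⟨w, hw⟩ : Λ) ∈ Metric.ball (0 : Λ) ε := by
      rw [Metric.mem_ball, Subtype.dist_eq]
      simpa [dist_eq_norm] using hlt
    simpa [Subtype.ext_iff] using hball this
  obtain ⟨ε, hε, hball⟩ := hdisc
  have hcont : Continuous fun u : V => c u - u :=
    ((c - LinearMap.id : V →ₗ[ℝ] V).continuous_of_finiteDimensional).congr fun u => by
      simp [LinearMap.sub_apply]
  obtain ⟨δ, hδ, hδε⟩ : ∃ δ > 0, ∀ u : V, ‖u‖ < δ → ‖c u - u‖ < ε := by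
    obtain ⟨δ, hδ, h⟩ := Metric.continuousAt_iff.mp (hcont.continuousAt (x := 0)) ε hε
    refine ⟨δ, hδ, fun u hu => ?_⟩
    have := h (show dist u 0 < δ by simpa [dist_eq_norm] using hu)
    simpa [dist_eq_norm] using this
  have hlc : IsLocallyConstant f := by
    rw [IsLocallyConstant.iff_exists_open]
    intro x
    refine ⟨Subtype.val ⁻¹' (QuotientAddGroup.mk '' Metric.ball x.1.out δ), ?_, ?_, ?_⟩
    · exact (QuotientAddGroup.isOpenMap_coe _ Metric.isOpen_ball).preimage
        continuous_subtype_val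
    · exact ⟨x.1.out, Metric.mem_ball_self hδ, QuotientAddGroup.out_eq' _⟩
    · rintro y ⟨w, hwball, hwy⟩
      have hwG : c w - w ∈ Λ.toAddSubgroup := by
        rw [← hGmem, hwy]; exact y.2
      have hxout : c x.1.out - x.1.out ∈ Λ.toAddSubgroup := (memG_out x).1
      have hdiff : (c w - w) - (c x.1.out - x.1.out) ∈ Λ.toAddSubgroup :=
        sub_mem hwG hxout
      have hdiff0 : (c w - w) - (c x.1.out - x.1.out) = 0 := by
        apply hball _ hdiff
        have heq : (c w - w) - (c x.1.out - x.1.out) = c (w - x.1.out) - (w - x.1.out) := by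
          simp only [map_sub]; abel
        rw [heq]
        exact hδε _ (by simpa [dist_eq_norm] using hwball)
      have hkey : c w - w = c x.1.out - x.1.out := sub_eq_zero.mp hdiff0
      rw [fval y w (mem' w hwG) hwy,
        fval x x.1.out (memG_out x) (QuotientAddGroup.out_eq' _)]
      exact congrArg _ (Subtype.ext hkey)
  -- fibers of f are connected
  have hfiber : ∀ x y : G, f x = f y → connectedComponent x = connectedComponent y := by
    intro x y hfxy
    simp only [hfdef] at hfxy
    rw [QuotientAddGroup.eq, hJdef, AddSubgroup.mem_addSubgroupOf] at hfxy
    obtain ⟨μ, hμ, hμeq⟩ := hfxy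
    set v := x.1.out with hvdef
    set w := y.1.out with hwdef
    have hμeq' : c μ - μ = -(c v - v) + (c w - w) := by
      simpa [LinearMap.sub_apply] using hμeq
    set u : V := w - v - μ with hudef
    have hexp : c u - u = (c w - w) - (c v - v) - (c μ - μ) := by
      rw [hudef]; simp only [map_sub]; abel
    have h2 : c u - u = 0 := by rw [hexp, hμeq']; abel
    have hcu : c u = u := by rwa [sub_eq_zero] at h2
    have hpathmem : ∀ t : ℝ, cbar (QuotientAddGroup.mk (v + μ + t • u)) =
        QuotientAddGroup.mk (v + μ + t • u) := by
      intro t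
      rw [hGmem]
      have heq : c (v + μ + t • u) - (v + μ + t • u) = (c v - v) + (c μ - μ) := by
        simp only [map_add, map_smul, hcu]
        abel
      rw [heq]
      exact add_mem (memG_out x).1 (sub_mem (hcΛ μ hμ) hμ)
    set p : ℝ → G := fun t => ⟨QuotientAddGroup.mk (v + μ + t • u), hpathmem t⟩ with hpdef
    have hpcont : Continuous p := by
      apply Continuous.subtype_mk
      exact continuous_quotient_mk'.comp (by fun_prop)
    have hx : p 0 = x := by
      apply Subtype.ext
      show QuotientAddGroup.mk (v + μ + (0:ℝ) • u) = x.1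
      have heq : QuotientAddGroup.mk (v + μ + (0:ℝ) • u) =
          (QuotientAddGroup.mk v : V ⧸ Λ.toAddSubgroup) := by
        rw [QuotientAddGroup.eq]
        have : -(v + μ + (0:ℝ) • u) + v = -μ := by rw [zero_smul, add_zero]; abel
        rw [this]
        exact neg_mem hμ
      rw [heq, hvdef, QuotientAddGroup.out_eq']
    have hy : p 1 = y := by
      apply Subtype.ext
      show QuotientAddGroup.mk (v + μ + (1:ℝ) • u) = y.1
      have heq : v + μ + (1:ℝ) • u = w := by rw [one_smul, hudef]; abel
      rw [heq, hwdef, QuotientAddGroup.out_eq']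
    have hconn : IsPreconnected (Set.range p) := isPreconnected_range hpcont
    have hsub : Set.range p ⊆ connectedComponent x :=
      hconn.subset_connectedComponent ⟨0, hx⟩
    exact connectedComponent_eq (hsub ⟨1, hy⟩)
  -- surjectivity
  have hsurj : ∀ q : Λ' ⧸ J, ∃ x : G, f x = q := by
    intro q
    induction q using QuotientAddGroup.induction_on with
    | H lam =>
      obtain ⟨hlamΛ, hlamk⟩ := lam.2
      have hk : c (lam : V) = -(lam : V) := by
        have h0 : c (lam : V) + (lam : V) = 0 := hlamk
        exact eq_neg_of_add_eq_zero_left h0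
      set w : V := -((2:ℝ)⁻¹ • (lam : V)) with hwdef
      have hcw : c w - w = (lam : V) := by
        rw [hwdef, map_neg, map_smul, hk]
        rw [smul_neg, neg_neg, sub_neg_eq_add, ← add_smul]
        rw [show ((2:ℝ)⁻¹ + (2:ℝ)⁻¹ : ℝ) = 1 by norm_num, one_smul]
      have hmemG : cbar (QuotientAddGroup.mk w) = QuotientAddGroup.mk w := by
        rw [hGmem, hcw]; exact hlamΛ
      refine ⟨⟨QuotientAddGroup.mk w, hmemG⟩, ?_⟩
      rw [fval ⟨QuotientAddGroup.mk w, hmemG⟩ w (by rw [hcw]; exact lam.2) rfl]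
      exact congrArg _ (Subtype.ext hcw)
  -- f descends to a bijection on connected components
  have hlift : ∀ a b : G, connectedComponent a = connectedComponent b → f a = f b := by
    intro a b h
    exact hlc.apply_eq_of_isPreconnected isPreconnected_connectedComponent
      mem_connectedComponent (h ▸ mem_connectedComponent)
  set F : ConnectedComponents G → Λ' ⧸ J := Quotient.lift f hlift with hFdef
  have hFbij : Function.Bijective F := by
    constructor
    · intro a b hab
      induction a using Quotient.ind with | _ a =>
      induction b using Quotient.ind with | _ b =>
      exact Quotient.sound (hfiber a b hab)
    · intro q
      obtain ⟨x, hx⟩ := hsurj q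
      exact ⟨Quotient.mk _ x, hx⟩
  -- finiteness of the quotient group
  have hfin : Finite (Λ' ⧸ J) := by
    haveI hNfin : Module.Finite ℤ Λ := ZLattice.module_finite ℝ Λ
    haveI hNoeth : IsNoetherian ℤ Λ := isNoetherian_of_isNoetherianRing_of_finite ℤ Λ
    set N : Submodule ℤ V := Λ ⊓ ((LinearMap.ker (c + LinearMap.id)).restrictScalars ℤ)
      with hNdef
    have hle : N ≤ Λ := inf_le_left
    haveI : Module.Finite ℤ N := by
      haveI : Module.Finite ℤ (Submodule.comap Λ.subtype N) := by
        rw [Module.Finite.iff_fg]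
        exact IsNoetherian.noetherian _
      exact Module.Finite.equiv (Submodule.comapSubtypeEquivOfLe hle)
    have hsame : ∀ x : V, x ∈ Λ' ↔ x ∈ N := by
      intro x
      constructor
      · rintro ⟨h1, h2⟩; exact ⟨h1, h2⟩
      · rintro ⟨h1, h2⟩; exact ⟨h1, h2⟩
    haveI hfgΛ' : AddGroup.FG Λ' := by
      haveI hfgN : AddGroup.FG N := Module.Finite.iff_addGroup_fg.mp inferInstance
      have e : (N : Type _) ≃+ (Λ' : Type _) :=
        { toFun := fun x => ⟨x.1, (hsame x.1).mpr x.2⟩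
          invFun := fun x => ⟨x.1, (hsame x.1).mp x.2⟩
          left_inv := fun x => rfl
          right_inv := fun x => rfl
          map_add' := fun x y => rfl }
      exact AddGroup.fg_of_surjective (f := e.toAddMonoidHom) e.surjective
    haveI : AddGroup.FG (Λ' ⧸ J) :=
      AddGroup.fg_of_surjective (f := QuotientAddGroup.mk' J)
        (QuotientAddGroup.mk'_surjective J)
    have htor : AddMonoid.IsTorsion (Λ' ⧸ J) := by
      intro q
      rw [isOfFinAddOrder_iff_nsmul_eq_zero]
      refine ⟨2, two_pos, ?_⟩
      induction q using QuotientAddGroup.induction_on with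
      | H lam =>
        rw [two_nsmul, ← QuotientAddGroup.mk_add, QuotientAddGroup.eq_zero_iff, hJdef,
          AddSubgroup.mem_addSubgroupOf]
        refine ⟨-(lam : V), neg_mem lam.2.1, ?_⟩
        have hk : c (lam : V) = -(lam : V) := by
          have h0 : c (lam : V) + (lam : V) = 0 := lam.2.2
          exact eq_neg_of_add_eq_zero_left h0
        simp only [LinearMap.toAddMonoidHom_coe, LinearMap.sub_apply, LinearMap.id_apply,
          map_neg, hk, neg_neg, sub_neg_eq_add, AddSubgroup.coe_add]
        abel
    exact AddCommGroup.finite_of_fg_torsion _ htor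
  refine ⟨?_, hfin, ?_⟩
  · exact Finite.of_equiv _ (Equiv.ofBijective F hFbij).symm
  · exact Nat.card_congr (Equiv.ofBijective F hFbij)
end
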